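/- (Distance instability.) For each m let Z^m, X^m_1, …, X^m_ℓ be random points and dist^m a nonnegative function of pairs of points, with all dist^m(Z^m, X^m_i) (i ≤ ℓ) identically distributed with finite positive mean μ_m = E[(dist^m(Z^m, X^m_i))^p] for some fixed p > 0. Suppose Var[(dist^m(Z^m, X^m_i))^p / μ_m] → 0 as m → ∞. Define D^m_min = min_i dist^m(Z^m, X^m_i) and D^m_max = max_i dist^m(Z^m, X^m_i). Then for every ε > 0, P(D^m_max ≤ (1+ε) D^m_min) → 1 as m → ∞. -/

import Mathlib

/-!
Normalise `Y i = D i ^ p / mu`, which has mean `1` and, the `D i` being identically distributed,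
the variance of `Y 0`. By Chebyshev's inequality and a union bound, with probability at least
`1 - l Var[Y 0] / δ²` all `Y i` lie within `δ` of `1`. For `δ` small in terms of `ε` and `p`, this
forces `D i ^ p ≤ (1 + ε) ^ p * D j ^ p` for all `i, j`, i.e. `max D ≤ (1 + ε) min D`.
-/

open MeasureTheory ProbabilityTheory Filter Topology

theorem Finset.sup'_le_mul_inf' {ι α : Type*} [LinearOrder α] [Mul α] {s : Finset ι}
    (hs : s.Nonempty) {f : ι → α} {c : α} (h : ∀ i ∈ s, ∀ j ∈ s, f i ≤ c * f j) :
    s.sup' hs f ≤ c * s.inf' hs f := by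
  obtain ⟨j, hj, hinf⟩ := s.exists_mem_eq_inf' hs f
  rw [hinf]
  exact Finset.sup'_le hs f fun i hi => h i hi j hj

theorem exists_pos_forall_le_mul_of_abs_sub_one_lt {t : ℝ} (ht : 1 < t) :
    ∃ δ > 0, ∀ u v : ℝ, |u - 1| < δ → |v - 1| < δ → u ≤ t * v := by
  -- `δ` is chosen so that `1 + δ = t * (1 - δ)`.
  refine ⟨(t - 1) / (t + 1), div_pos (by linarith) (by linarith), fun u v hu hv => ?_⟩
  have hkey : 1 + (t - 1) / (t + 1) = t * (1 - (t - 1) / (t + 1)) := by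
    field_simp
    ring
  have hu' := (abs_lt.mp hu).2
  have hv' := (abs_lt.mp hv).1
  nlinarith

theorem exists_pos_forall_le_one_add_mul_of_abs_rpow_div_sub_one_lt {p ε : ℝ} (hp : 0 < p)
    (hε : 0 < ε) :
    ∃ δ > 0, ∀ a x y : ℝ, 0 < a → 0 ≤ x → 0 ≤ y →
      |x ^ p / a - 1| < δ → |y ^ p / a - 1| < δ → x ≤ (1 + ε) * y := by
  have hc : 1 < (1 + ε) ^ p := Real.one_lt_rpow (by linarith) hp
  obtain ⟨δ, hδ, hclose⟩ := exists_pos_forall_le_mul_of_abs_sub_one_lt hc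
  refine ⟨δ, hδ, fun a x y ha hx hy hxδ hyδ => ?_⟩
  have hdiv : x ^ p / a ≤ (1 + ε) ^ p * (y ^ p / a) := hclose _ _ hxδ hyδ
  have hpow : x ^ p ≤ ((1 + ε) * y) ^ p := by
    rw [← mul_div_assoc] at hdiv
    rw [Real.mul_rpow (by linarith) hy]
    exact (div_le_div_iff_of_pos_right ha).mp hdiv
  exact (Real.rpow_le_rpow_iff hx (by positivity) hp).mp hpow

theorem measure_exists_abs_sub_integral_ge_le {Ω ι : Type*} [MeasurableSpace Ω] {μ : Measure Ω}
    [IsFiniteMeasure μ] [Fintype ι] {Y : ι → Ω → ℝ} (hY : ∀ i, MemLp (Y i) 2 μ) {δ : ℝ}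
    (hδ : 0 < δ) :
    μ {ω | ∃ i, δ ≤ |Y i ω - μ[Y i]|} ≤ ENNReal.ofReal ((∑ i, variance (Y i) μ) / δ ^ 2) := by
  rw [Finset.sum_div, Set.ofPred_exists,
    ENNReal.ofReal_sum_of_nonneg fun i _ => div_nonneg (variance_nonneg _ _) (sq_nonneg _)]
  exact (measure_iUnion_fintype_le μ _).trans
    (Finset.sum_le_sum fun i _ => meas_ge_le_variance_div_sq (hY i) hδ)

theorem tendsto_measure_of_tendsto_measure_compl {ι : Type*} {Ω : ι → Type*}
    [∀ i, MeasurableSpace (Ω i)] {μ : ∀ i, Measure (Ω i)} [∀ i, IsProbabilityMeasure (μ i)]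
    {L : Filter ι} {S : ∀ i, Set (Ω i)} (h : Tendsto (fun i => μ i (S i)ᶜ) L (𝓝 0)) :
    Tendsto (fun i => μ i (S i)) L (𝓝 1) := by
  have hlower : Tendsto (fun i => 1 - μ i (S i)ᶜ) L (𝓝 1) := by
    simpa using ENNReal.Tendsto.sub tendsto_const_nhds h (Or.inl ENNReal.one_ne_top)
  refine tendsto_of_tendsto_of_tendsto_of_le_of_le hlower tendsto_const_nhds (fun i => ?_)
    fun i => prob_le_one
  -- subadditivity gives `μ univ ≤ μ s + μ sᶜ` without any measurability of `s`
  rw [tsub_le_iff_right, ← measure_univ (μ := μ i), ← Set.union_compl_self (S i)]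
  exact measure_union_le _ _

theorem distance_instability
    (l : ℕ) (hl : 0 < l)
    (Om : ℕ → Type*) [∀ m, MeasurableSpace (Om m)]
    (μ : ∀ m, Measure (Om m)) (hprob : ∀ m, IsProbabilityMeasure (μ m))
    (D : ∀ m, Fin l → Om m → ℝ)
    (hmeas : ∀ m i, Measurable (D m i))
    (hnonneg : ∀ m i ω, 0 ≤ D m i ω)
    (p : ℝ) (hp : 0 < p)
    (mu : ℕ → ℝ)
    (hmu : ∀ m i, ∫ ω, (D m i ω) ^ p ∂(μ m) = mu m)
    (hmupos : ∀ m, 0 < mu m)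
    (hident : ∀ m i, (μ m).map (D m i) = (μ m).map (D m ⟨0, hl⟩))
    (hL2 : ∀ m i, MemLp (fun ω => (D m i ω) ^ p) 2 (μ m))
    (hvar : Tendsto
      (fun m => variance (fun ω => (D m ⟨0, hl⟩ ω) ^ p / mu m) (μ m))
      atTop (nhds 0)) :
    ∀ ε > (0 : ℝ),
      Tendsto
        (fun m => μ m {ω |
          (Finset.univ.sup' ⟨⟨0, hl⟩, Finset.mem_univ _⟩ fun i => D m i ω)
            ≤ (1 + ε) *
          (Finset.univ.inf' ⟨⟨0, hl⟩, Finset.mem_univ _⟩ fun i => D m i ω)})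
        atTop (nhds 1) := by
  intro ε hε
  have := hprob
  obtain ⟨δ, hδ, hclose⟩ := exists_pos_forall_le_one_add_mul_of_abs_rpow_div_sub_one_lt hp hε
  set Y : ∀ m, Fin l → Om m → ℝ := fun m i ω => D m i ω ^ p / mu m
  have hYL2 (m i) : MemLp (Y m i) 2 (μ m) := by
    simpa only [Y, div_eq_mul_inv] using (hL2 m i).mul_const (mu m)⁻¹
  have hYmean (m i) : (μ m)[Y m i] = 1 := by
    rw [integral_div, hmu, div_self (hmupos m).ne']
  have hYvar (m i) : variance (Y m i) (μ m) = variance (Y m ⟨0, hl⟩) (μ m) :=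
    (IdentDistrib.comp ⟨(hmeas m i).aemeasurable, (hmeas m _).aemeasurable, hident m i⟩
      ((Real.continuous_rpow_const hp.le).measurable.div_const (mu m))).variance_eq
  have hbound : Tendsto (fun m => ENNReal.ofReal (l * variance (Y m ⟨0, hl⟩) (μ m) / δ ^ 2))
      atTop (𝓝 0) := by
    simpa using ENNReal.tendsto_ofReal ((hvar.const_mul (l : ℝ)).div_const (δ ^ 2))
  refine tendsto_measure_of_tendsto_measure_compl <|
    tendsto_of_tendsto_of_tendsto_of_le_of_le tendsto_const_nhds hbound (fun m => zero_le)
      fun m => ?_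
  calc _ ≤ (μ m) {ω | ∃ i, δ ≤ |Y m i ω - (μ m)[Y m i]|} := by
        refine measure_mono fun ω hω => ?_
        simp only [Set.mem_ofPred_eq, hYmean]
        by_contra! hY
        exact hω (Finset.sup'_le_mul_inf' _ fun i _ j _ =>
          hclose _ _ _ (hmupos m) (hnonneg m i ω) (hnonneg m j ω) (hY i) (hY j))
    _ ≤ _ := measure_exists_abs_sub_integral_ge_le (hYL2 m) hδ
    _ = _ := by simp [hYvar]
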